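/- Let N ≥ 2, let A_N be the adjacency matrix of the hypercube graph H_N, and let P = (1/N)·A_N be its transition probability matrix. Then for every i ∈ {0, 1, …, N}, the minimum of the nonzero entries of the matrix power P^i equals i!·N^{−i}; equivalently, the minimum of the nonzero entries of A_N^i equals i!. -/

import Mathlib

open Nat

/-- The hypercube graph `H_N` on vertex set `{0,1}^N`: two binary strings are
adjacent iff their Hamming distance equals 1. -/
def hypercube (N : ℕ) : SimpleGraph (Fin N → Bool) where
  Adj x y := hammingDist x y = 1
  symm := by
    constructor
    intro x y h
    exact (hammingDist_comm y x).trans h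
  loopless := by
    constructor
    intro x h
    simp [hammingDist_self] at h

instance (N : ℕ) : DecidableRel (hypercube N).Adj := fun x y =>
  inferInstanceAs (Decidable (hammingDist x y = 1))

/-!
Let `W i x y` be the number of walks of length `i` from `x` to `y` in the hypercube. Since the
neighbours of `x` are the `N` words obtained by flipping one bit, `W (i+1) x y` is the sum of
`W i x' y` over those flips `x'`. By induction, `W i x y ≠ 0` exactly when `d(x, y) ≤ i` and
`d(x, y) ≡ i (mod 2)`. If `d(x, y) = i`, only the `i` flips towards `y` can still reach `y`,
so `W i x y = i!` (one walk per ordering of the differing bits). If `W (i+1) x y ≠ 0` and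
`d(x, y) < i + 1`, then `d(x, y) ≤ i - 1`, so every one of the `N ≥ i + 1` neighbours reaches
`y` in `i` steps, and induction gives `W (i+1) x y ≥ N · i! ≥ (i+1)!`. Finally `P^i = N^{-i} A^i`.
-/

open Finset Function

section HammingUpdate

variable {ι β : Type*} [Fintype ι] [DecidableEq ι] [DecidableEq β]

theorem hammingDist_update_add (x y : ι → β) (j : ι) (b : β) :
    hammingDist (update x j b) y + (if x j ≠ y j then 1 else 0) =
      hammingDist x y + (if b ≠ y j then 1 else 0) := by
  simp only [hammingDist, card_filter, ← add_sum_erase _ _ (mem_univ j), update_self]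
  rw [sum_congr rfl fun k hk => by rw [update_of_ne (ne_of_mem_erase hk)]]
  ring

end HammingUpdate

section FlipBit

variable {ι : Type*} [DecidableEq ι]

def flipBit (x : ι → Bool) (j : ι) : ι → Bool := update x j (!x j)

theorem flipBit_injective (x : ι → Bool) : Injective (flipBit x) := by
  intro j k h
  by_contra hjk
  simpa [flipBit, update_of_ne hjk] using congrFun h j

variable [Fintype ι] {x y : ι → Bool} {j : ι}

theorem hammingDist_flipBit_of_ne (h : x j ≠ y j) :
    hammingDist (flipBit x j) y + 1 = hammingDist x y := by
  have := hammingDist_update_add x y j (!x j)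
  simp_all [flipBit]

theorem hammingDist_flipBit_of_eq (h : x j = y j) :
    hammingDist (flipBit x j) y = hammingDist x y + 1 := by
  have := hammingDist_update_add x y j (!x j)
  simp_all [flipBit]

theorem hammingDist_flipBit_eq_add_one_or (x y : ι → Bool) (j : ι) :
    hammingDist (flipBit x j) y = hammingDist x y + 1 ∨
      hammingDist (flipBit x j) y + 1 = hammingDist x y := by
  by_cases h : x j = y j
  · exact .inl (hammingDist_flipBit_of_eq h)
  · exact .inr (hammingDist_flipBit_of_ne h)

theorem hammingDist_eq_one_iff_exists_flipBit {x z : ι → Bool} :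
    hammingDist x z = 1 ↔ ∃ j, flipBit x j = z := by
  constructor
  · intro h
    obtain ⟨j, hj⟩ := card_eq_one.1 h
    have hdiff : ∀ k, x k ≠ z k ↔ k = j := fun k => by
      simpa using congrArg (k ∈ ·) hj
    refine ⟨j, funext fun k => ?_⟩
    by_cases hk : k = j
    · subst hk; simpa [flipBit, Bool.eq_not_iff] using ((hdiff k).2 rfl)
    · simpa [flipBit, update_of_ne hk] using mt (hdiff k).1 hk
  · rintro ⟨j, rfl⟩
    rw [hammingDist_comm, hammingDist_flipBit_of_eq rfl, hammingDist_self]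

end FlipBit

namespace hypercube

variable {N : ℕ}

theorem adj_iff {x y : Fin N → Bool} : (hypercube N).Adj x y ↔ hammingDist x y = 1 :=
  Iff.rfl

theorem neighborFinset_eq_map (x : Fin N → Bool) :
    (hypercube N).neighborFinset x = univ.map ⟨flipBit x, flipBit_injective x⟩ := by
  ext z
  simp [adj_iff, hammingDist_eq_one_iff_exists_flipBit]

theorem adjMatrix_pow_succ_apply {α : Type*} [Semiring α] (i : ℕ) (x y : Fin N → Bool) :
    ((hypercube N).adjMatrix α ^ (i + 1)) x y =
      ∑ j, ((hypercube N).adjMatrix α ^ i) (flipBit x j) y := by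
  rw [_root_.pow_succ', SimpleGraph.adjMatrix_mul_apply, neighborFinset_eq_map, sum_map]
  rfl

theorem hammingDist_le_and_mod_two_of_adjMatrix_pow_apply_ne_zero {i : ℕ}
    {x y : Fin N → Bool} (h : ((hypercube N).adjMatrix ℕ ^ i) x y ≠ 0) :
    hammingDist x y ≤ i ∧ hammingDist x y % 2 = i % 2 := by
  induction i generalizing x with
  | zero =>
    obtain rfl : x = y := by
      by_contra hxy
      simp [Matrix.one_apply_ne hxy] at h
    simp
  | succ i ih =>
    rw [adjMatrix_pow_succ_apply] at h
    obtain ⟨j, -, hj⟩ := exists_ne_zero_of_sum_ne_zero h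
    have := ih hj
    have := hammingDist_flipBit_eq_add_one_or x y j
    omega

theorem adjMatrix_pow_apply_ne_zero (hN : 0 < N) {i : ℕ} {x y : Fin N → Bool}
    (hle : hammingDist x y ≤ i) (hpar : hammingDist x y % 2 = i % 2) :
    ((hypercube N).adjMatrix ℕ ^ i) x y ≠ 0 := by
  induction i generalizing x with
  | zero =>
    obtain rfl := eq_of_hammingDist_eq_zero (Nat.le_zero.1 hle)
    simp
  | succ i ih =>
    suffices ∃ j, hammingDist (flipBit x j) y ≤ i ∧ hammingDist (flipBit x j) y % 2 = i % 2 by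
      obtain ⟨j, hj, hjpar⟩ := this
      rw [adjMatrix_pow_succ_apply]
      exact fun hsum => ih hj hjpar (sum_eq_zero_iff.1 hsum j (mem_univ j))
    by_cases hxy : x = y
    · subst hxy
      have := hammingDist_flipBit_of_eq (rfl : x ⟨0, hN⟩ = x ⟨0, hN⟩)
      rw [hammingDist_self] at this hpar
      exact ⟨⟨0, hN⟩, by omega, by omega⟩
    · obtain ⟨j, hj⟩ := Function.ne_iff.1 hxy
      have := hammingDist_flipBit_of_ne hj
      exact ⟨j, by omega, by omega⟩

theorem adjMatrix_pow_apply_of_hammingDist_eq {i : ℕ} {x y : Fin N → Bool}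
    (h : hammingDist x y = i) : ((hypercube N).adjMatrix ℕ ^ i) x y = i ! := by
  induction i generalizing x with
  | zero =>
    obtain rfl := eq_of_hammingDist_eq_zero h
    simp
  | succ i ih =>
    have hterm (j : Fin N) :
        ((hypercube N).adjMatrix ℕ ^ i) (flipBit x j) y = if x j ≠ y j then i ! else 0 := by
      split_ifs with hj
      · exact ih (by have := hammingDist_flipBit_of_ne hj; omega)
      · by_contra hne
        have := (hammingDist_le_and_mod_two_of_adjMatrix_pow_apply_ne_zero hne).1
        have := hammingDist_flipBit_of_eq (not_not.1 hj)
        omega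
    rw [adjMatrix_pow_succ_apply, sum_congr rfl fun j _ => hterm j, ← sum_filter, sum_const,
      smul_eq_mul]
    change hammingDist x y * i ! = _
    rw [h, factorial_succ]

theorem factorial_le_adjMatrix_pow_apply {i : ℕ} (hi : i ≤ N) {x y : Fin N → Bool}
    (h : ((hypercube N).adjMatrix ℕ ^ i) x y ≠ 0) :
    i ! ≤ ((hypercube N).adjMatrix ℕ ^ i) x y := by
  induction i generalizing x with
  | zero => simpa [Nat.one_le_iff_ne_zero] using h
  | succ i ih =>
    obtain ⟨hle, hpar⟩ := hammingDist_le_and_mod_two_of_adjMatrix_pow_apply_ne_zero h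
    rcases hle.eq_or_lt with hd | hd
    · exact (adjMatrix_pow_apply_of_hammingDist_eq hd).ge
    have hterm (j : Fin N) : i ! ≤ ((hypercube N).adjMatrix ℕ ^ i) (flipBit x j) y := by
      have := hammingDist_flipBit_eq_add_one_or x y j
      exact ih (by omega) (adjMatrix_pow_apply_ne_zero (by omega) (by omega) (by omega))
    calc (i + 1)! = (i + 1) * i ! := factorial_succ i
      _ ≤ N * i ! := by gcongr
      _ = ∑ _j : Fin N, i ! := by simp
      _ ≤ ∑ j, ((hypercube N).adjMatrix ℕ ^ i) (flipBit x j) y :=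
          sum_le_sum fun j _ => hterm j
      _ = _ := (adjMatrix_pow_succ_apply i x y).symm

end hypercube

theorem SimpleGraph.smul_adjMatrix_pow_apply {V : Type*} [Fintype V] [DecidableEq V]
    (G : SimpleGraph V) [DecidableRel G.Adj] {α : Type*} [CommSemiring α] (c : α) (n : ℕ)
    (u v : V) : ((c • G.adjMatrix α) ^ n) u v = c ^ n * ((G.adjMatrix ℕ ^ n) u v : α) := by
  rw [smul_pow, Matrix.smul_apply, adjMatrix_pow_apply_eq_card_walk,
    adjMatrix_pow_apply_eq_card_walk, smul_eq_mul, Nat.cast_id]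

theorem stmt13_general (N : ℕ) (i : ℕ) (hi : i ≤ N) :
    (∀ x y : Fin N → Bool,
        ((SimpleGraph.adjMatrix ℕ (hypercube N)) ^ i) x y ≠ 0 →
        Nat.factorial i ≤ ((SimpleGraph.adjMatrix ℕ (hypercube N)) ^ i) x y) ∧
    (∃ x y : Fin N → Bool,
        ((SimpleGraph.adjMatrix ℕ (hypercube N)) ^ i) x y = Nat.factorial i) ∧
    (∀ x y : Fin N → Bool,
        (((N : ℝ)⁻¹ • SimpleGraph.adjMatrix ℝ (hypercube N)) ^ i) x y ≠ 0 →
        (Nat.factorial i : ℝ) * ((N : ℝ) ^ i)⁻¹ ≤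
          (((N : ℝ)⁻¹ • SimpleGraph.adjMatrix ℝ (hypercube N)) ^ i) x y) ∧
    (∃ x y : Fin N → Bool,
        (((N : ℝ)⁻¹ • SimpleGraph.adjMatrix ℝ (hypercube N)) ^ i) x y =
          (Nat.factorial i : ℝ) * ((N : ℝ) ^ i)⁻¹) := by
  obtain ⟨x₀, y₀, hdist⟩ : ∃ x y : Fin N → Bool, hammingDist x y = i :=
    ⟨fun _ => false, fun j => decide ((j : ℕ) < i), by
      simp [hammingDist, Fin.card_filter_val_lt, hi]⟩
  have hmin := hypercube.adjMatrix_pow_apply_of_hammingDist_eq hdist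
  simp only [SimpleGraph.smul_adjMatrix_pow_apply, inv_pow, mul_comm _ ((N : ℝ) ^ i)⁻¹]
  refine ⟨fun x y => hypercube.factorial_le_adjMatrix_pow_apply hi, ⟨x₀, y₀, hmin⟩,
    fun x y hne => ?_, ⟨x₀, y₀, by rw [hmin]⟩⟩
  have hnat : ((hypercube N).adjMatrix ℕ ^ i) x y ≠ 0 := fun h => hne (by simp [h])
  gcongr
  exact_mod_cast hypercube.factorial_le_adjMatrix_pow_apply hi hnat

/-- For `N ≥ 2` and every `i ∈ {0,…,N}`, the minimum of the nonzero entries of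
the `i`-th power of the transition matrix `P = (1/N)·A_N` of the hypercube
equals `i!·N^{−i}`; equivalently, the minimum of the nonzero entries of `A_N^i`
equals `i!`. -/
theorem stmt13 (N : ℕ) (hN : 2 ≤ N) (i : ℕ) (hi : i ≤ N) :
    (∀ x y : Fin N → Bool,
        ((SimpleGraph.adjMatrix ℕ (hypercube N)) ^ i) x y ≠ 0 →
        Nat.factorial i ≤ ((SimpleGraph.adjMatrix ℕ (hypercube N)) ^ i) x y) ∧
    (∃ x y : Fin N → Bool,
        ((SimpleGraph.adjMatrix ℕ (hypercube N)) ^ i) x y = Nat.factorial i) ∧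
    (∀ x y : Fin N → Bool,
        (((N : ℝ)⁻¹ • SimpleGraph.adjMatrix ℝ (hypercube N)) ^ i) x y ≠ 0 →
        (Nat.factorial i : ℝ) * ((N : ℝ) ^ i)⁻¹ ≤
          (((N : ℝ)⁻¹ • SimpleGraph.adjMatrix ℝ (hypercube N)) ^ i) x y) ∧
    (∃ x y : Fin N → Bool,
        (((N : ℝ)⁻¹ • SimpleGraph.adjMatrix ℝ (hypercube N)) ^ i) x y =
          (Nat.factorial i : ℝ) * ((N : ℝ) ^ i)⁻¹) :=
  stmt13_general N i hi
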